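/- Let $H$ be a Hilbert space, $(S_t)$ a $C_0$-semigroup on $H$ with each $S_t$ ($t>0$) compact. Then the operator $G : L^2([0,1]; H) \to H$ defined by $G f = \int_0^1 S_{1-s} f(s)\, ds$ is a compact operator. Consequently, if $F : H \to H$ is bounded, the set $\{\int_0^1 S_{1-s} g(s)\, ds : g \text{ measurable}, \sup_s |g(s)| \le C_F\}$ is relatively compact in $H$. -/

import Mathlib

/-!
A set `Y` in a Hilbert space is relatively compact as soon as every bounded weakly null sequence
`u_j` converges to `0` uniformly on `Y`: if `y_j ∈ Y` converges weakly to `y` (a subsequence always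
does), then `u_j = y_j - y` is such a sequence and `‖u_j‖² = ⟪y_j, u_j⟫ - ⟪y, u_j⟫ → 0`.
For `y = ∫ S_{1-s} f(s) ds` we have `|⟪y, u⟫| ≤ ∫ ‖f(s)‖ ‖S_{1-s}^* u‖ ds`. Since `S_{1-s}` is
compact for `s < 1`, `‖S_{1-s}^* u_j‖ → 0` pointwise, so by dominated convergence the bound tends
to `0` uniformly over `f` in the unit ball of `L²` (by Cauchy–Schwarz) and over `f` bounded by
`C_F` (directly).
-/

open MeasureTheory Filter Topology
open scoped RealInnerProductSpace InnerProduct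

theorem totallyBounded_of_forall_exists_subseq_tendsto {X : Type*} [UniformSpace X] {s : Set X}
    (h : ∀ u : ℕ → X, (∀ n, u n ∈ s) →
      ∃ x, ∃ φ : ℕ → ℕ, StrictMono φ ∧ Tendsto (u ∘ φ) atTop (𝓝 x)) :
    TotallyBounded s := by
  intro V hV
  by_contra! hcover
  obtain ⟨u, hu⟩ := Set.seq_of_forall_finite_exists
    (P := fun x (t : Set X) => x ∈ s ∧ ∀ y ∈ t, (x, y) ∉ V) fun t ht => by
      simpa [Set.not_subset] using hcover t ht
  obtain ⟨x, φ, hφ, hx⟩ := h u fun n => (hu n).1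
  obtain ⟨N, hN⟩ := hx.cauchySeq.mem_entourage hV
  exact (hu (φ (N + 1))).2 _ ⟨φ N, hφ (Nat.lt_add_one N), rfl⟩ (hN (N + 1) N (by omega) le_rfl)

theorem lowerSemicontinuous_norm_of_continuous_inner {X H : Type*} [TopologicalSpace X]
    [NormedAddCommGroup H] [InnerProductSpace ℝ H] {v : X → H}
    (hv : ∀ x, Continuous fun t => ⟪v t, x⟫) : LowerSemicontinuous fun t => ‖v t‖ := by
  intro t₀ c hc
  -- `⟪v t, v t₀⟫ / ‖v t₀‖` is a continuous minorant of `‖v t‖` which agrees with it at `t₀`.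
  have h₀ : ⟪v t₀, v t₀⟫ / ‖v t₀‖ = ‖v t₀‖ := by
    rw [real_inner_self_eq_norm_mul_norm, mul_self_div_self]
  have hc' : c < ⟪v t₀, v t₀⟫ / ‖v t₀‖ := by rw [h₀]; exact hc
  filter_upwards [((hv (v t₀)).div_const ‖v t₀‖).continuousAt.eventually (lt_mem_nhds hc')]
    with t ht
  exact ht.trans_le (div_le_of_le_mul₀ (norm_nonneg _) (norm_nonneg _) (real_inner_le_norm _ _))

theorem exists_forall_norm_le_of_isCompact {X E F : Type*} [TopologicalSpace X]
    [NormedAddCommGroup E] [NormedSpace ℝ E] [CompleteSpace E]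
    [SeminormedAddCommGroup F] [NormedSpace ℝ F] {A : X → E →L[ℝ] F}
    (hA : ∀ x, Continuous fun t => A t x) {K : Set X} (hK : IsCompact K) :
    ∃ M, ∀ t ∈ K, ‖A t‖ ≤ M := by
  obtain ⟨M, hM⟩ := banach_steinhaus (g := fun t : K => A t) fun x => by
    obtain ⟨C, hC⟩ := (hK.image (hA x).norm).bddAbove
    exact ⟨C, fun t => hC ⟨t, t.2, rfl⟩⟩
  exact ⟨M, fun t ht => hM ⟨t, ht⟩⟩

section WeakConvergence

variable {H : Type*} [NormedAddCommGroup H] [InnerProductSpace ℝ H]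

theorem exists_subseq_forall_inner_tendsto [CompleteSpace H] {y : ℕ → H} {C : ℝ}
    (hy : ∀ n, ‖y n‖ ≤ C) :
    ∃ y₀ : H, ∃ φ : ℕ → ℕ, StrictMono φ ∧
      ∀ z, Tendsto (fun j => ⟪y (φ j), z⟫) atTop (𝓝 ⟪y₀, z⟫) := by
  -- Sequential Banach–Alaoglu in the separable closed span `M` of the sequence, then project.
  set M := (Submodule.span ℝ (Set.range y)).topologicalClosure
  have hyM n : y n ∈ M :=
    Submodule.le_topologicalClosure _ (Submodule.subset_span (Set.mem_range_self n))
  have : CompleteSpace M := (Submodule.isClosed_topologicalClosure _).completeSpace_coe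
  have : TopologicalSpace.SeparableSpace M := by
    have := ((Set.countable_range y).isSeparable.span (R := ℝ)).closure
    rw [← Submodule.topologicalClosure_coe] at this
    exact this.separableSpace
  set ℓ : ℕ → WeakDual ℝ M := fun n => innerSL ℝ (⟨y n, hyM n⟩ : M)
  have hℓ n : ℓ n ∈ WeakDual.toStrongDual ⁻¹' Metric.closedBall 0 C :=
    mem_closedBall_zero_iff.2 ((innerSL_apply_norm ℝ (⟨y n, hyM n⟩ : M)).trans_le (hy n))
  obtain ⟨ℓ₀, -, φ, hφ, hlim⟩ := WeakDual.isSeqCompact_closedBall ℝ M 0 C hℓ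
  refine ⟨(InnerProductSpace.toDual ℝ M).symm (WeakDual.toStrongDual ℓ₀), φ, hφ, fun z => ?_⟩
  have hℓz n : ⟪y n, z⟫ = ℓ n (M.orthogonalProjectionOnto z) :=
    (Submodule.inner_orthogonalProjectionOnto_eq_of_mem_left ⟨y n, hyM n⟩ z).symm
  simp_rw [hℓz, ← Submodule.inner_orthogonalProjectionOnto_eq_of_mem_left,
    InnerProductSpace.toDual_symm_apply]
  exact ((WeakDual.eval_continuous _).tendsto ℓ₀).comp hlim

theorem tendstoUniformlyOn_inner_of_isCompact {u : ℕ → H} {C : ℝ} (hu : ∀ j, ‖u j‖ ≤ C)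
    (hw : ∀ z, Tendsto (fun j => ⟪u j, z⟫) atTop (𝓝 0)) {K : Set H} (hK : IsCompact K) :
    TendstoUniformlyOn (fun j z => ⟪u j, z⟫) 0 atTop K := by
  have := isCompact_iff_compactSpace.mp hK
  have hlip j : LipschitzWith C.toNNReal fun z : K => ⟪u j, z⟫ :=
    LipschitzWith.of_dist_le_mul fun a b => by
      rw [Real.dist_eq, ← inner_sub_right, Subtype.dist_eq, dist_eq_norm]
      exact (abs_real_inner_le_norm _ _).trans
        (mul_le_mul_of_nonneg_right ((hu j).trans C.le_coe_toNNReal) (norm_nonneg _))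
  rw [tendstoUniformlyOn_iff_tendstoUniformly_comp_coe]
  refine UniformFun.tendsto_iff_tendstoUniformly.1 <|
    ((LipschitzWith.uniformEquicontinuous _ _ hlip).equicontinuous.tendsto_uniformFun_iff_pi
      _ _).2 ?_
  exact tendsto_pi_nhds.2 fun z => hw z

theorem totallyBounded_of_forall_weakly_null [CompleteSpace H] {Y : Set H} {R : ℝ}
    (hY : ∀ y ∈ Y, ‖y‖ ≤ R)
    (h : ∀ (u : ℕ → H) (C : ℝ), (∀ j, ‖u j‖ ≤ C) →
      (∀ z, Tendsto (fun j => ⟪u j, z⟫) atTop (𝓝 0)) →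
      ∃ c : ℕ → ℝ, Tendsto c atTop (𝓝 0) ∧ ∀ j, ∀ y ∈ Y, |⟪y, u j⟫| ≤ c j) :
    TotallyBounded Y := by
  refine totallyBounded_of_forall_exists_subseq_tendsto fun y hy => ?_
  obtain ⟨y₀, φ, hφ, hlim⟩ := exists_subseq_forall_inner_tendsto fun n => hY _ (hy n)
  set u := fun j => y (φ j) - y₀
  have hw z : Tendsto (fun j => ⟪u j, z⟫) atTop (𝓝 0) := by
    simpa [u, inner_sub_left] using (hlim z).sub_const ⟪y₀, z⟫
  obtain ⟨c, hc, hcY⟩ := h u (R + ‖y₀‖)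
    (fun j => (norm_sub_le _ _).trans (add_le_add_left (hY _ (hy _)) _)) hw
  have hsq j : ‖u j‖ ^ 2 ≤ c j + |⟪y₀, u j⟫| := by
    rw [← real_inner_self_eq_norm_sq]
    calc ⟪u j, u j⟫ = ⟪y (φ j), u j⟫ - ⟪y₀, u j⟫ := inner_sub_left _ _ _
      _ ≤ c j + |⟪y₀, u j⟫| := by
        linarith [le_of_abs_le (hcY j _ (hy (φ j))), neg_abs_le ⟪y₀, u j⟫]
  have hu0 : Tendsto (fun j => ‖u j‖ ^ 2) atTop (𝓝 0) := by
    refine squeeze_zero (fun _ => sq_nonneg _) hsq ?_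
    simpa using hc.add (by simpa [real_inner_comm] using (hw y₀).abs)
  refine ⟨y₀, φ, hφ, tendsto_iff_norm_sub_tendsto_zero.2 ?_⟩
  simpa using hu0.sqrt

end WeakConvergence

section Adjoint

variable {E F : Type*} [NormedAddCommGroup E] [InnerProductSpace ℝ E] [CompleteSpace E]
  [NormedAddCommGroup F] [InnerProductSpace ℝ F] [CompleteSpace F]

theorem ContinuousLinearMap.norm_adjoint_apply_le_of_norm_le {T : E →L[ℝ] F} {M : ℝ}
    (hT : ‖T‖ ≤ M) (u : F) : ‖(T†) u‖ ≤ M * ‖u‖ :=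
  (T†).le_of_opNorm_le_of_le (by rwa [LinearIsometryEquiv.norm_map]) le_rfl

theorem ContinuousLinearMap.norm_adjoint_apply_le_of_forall_abs_inner_le (T : E →L[ℝ] F) (u : F) {c : ℝ} (hc : 0 ≤ c)
    (h : ∀ x, ‖x‖ = 1 → |⟪u, T x⟫| ≤ c) : ‖(T†) u‖ ≤ c := by
  rw [← innerSL_apply_norm ℝ]
  refine ContinuousLinearMap.opNorm_le_of_unit_norm hc fun x hx => ?_
  simpa [adjoint_inner_left] using h x hx

theorem IsCompactOperator.tendsto_norm_adjoint_apply {T : E →L[ℝ] F} (hT : IsCompactOperator T)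
    {u : ℕ → F} {C : ℝ} (hu : ∀ j, ‖u j‖ ≤ C)
    (hw : ∀ z, Tendsto (fun j => ⟪u j, z⟫) atTop (𝓝 0)) :
    Tendsto (fun j => ‖(T†) (u j)‖) atTop (𝓝 0) := by
  have hunif := tendstoUniformlyOn_inner_of_isCompact hu hw
    (hT.isCompact_closure_image_closedBall 1)
  refine Metric.tendsto_nhds.2 fun ε hε => ?_
  filter_upwards [Metric.tendstoUniformlyOn_iff.1 hunif (ε / 2) (half_pos hε)] with j hj
  have : ‖(T†) (u j)‖ ≤ ε / 2 := T.norm_adjoint_apply_le_of_forall_abs_inner_le _ (half_pos hε).le fun x hx => by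
    simpa using (hj (T x) (subset_closure ⟨x, by simp [hx], rfl⟩)).le
  rw [Real.dist_0_eq_abs, abs_of_nonneg (norm_nonneg _)]
  linarith

end Adjoint

section Kernel

variable {H : Type*} [NormedAddCommGroup H] [InnerProductSpace ℝ H] [CompleteSpace H]

theorem abs_inner_integral_le_integral_norm_mul {α : Type*} [MeasurableSpace α] {μ : Measure α}
    (A : α → H →L[ℝ] H) (f : α → H) (u : H)
    (hint : Integrable (fun s => ‖f s‖ * ‖(A s†) u‖) μ) :
    |⟪∫ s, A s (f s) ∂μ, u⟫| ≤ ∫ s, ‖f s‖ * ‖(A s†) u‖ ∂μ := by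
  by_cases hAf : Integrable (fun s => A s (f s)) μ
  · rw [real_inner_comm, ← integral_inner hAf, ← Real.norm_eq_abs]
    refine norm_integral_le_of_norm_le hint (ae_of_all _ fun s => ?_)
    rw [real_inner_comm, ← ContinuousLinearMap.adjoint_inner_right, Real.norm_eq_abs]
    exact abs_real_inner_le_norm _ _
  · rw [integral_undef hAf, inner_zero_left, abs_zero]
    exact integral_nonneg fun s => by positivity

variable {α : Type*} [TopologicalSpace α] [MeasurableSpace α] [OpensMeasurableSpace α]
  {μ : Measure α} [IsFiniteMeasure μ] {A : α → H →L[ℝ] H}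

theorem measurable_norm_adjoint_apply (hA : ∀ x, Continuous fun s => A s x) (u : H) :
    Measurable fun s => ‖(A s†) u‖ :=
  (lowerSemicontinuous_norm_of_continuous_inner fun x => by
    simpa only [ContinuousLinearMap.adjoint_inner_left] using
      continuous_const.inner (hA x)).measurable

theorem tendsto_integral_norm_adjoint_rpow (hA : ∀ x, Continuous fun s => A s x) {M : ℝ}
    (hM : ∀ᵐ s ∂μ, ‖A s‖ ≤ M) (hK : ∀ᵐ s ∂μ, IsCompactOperator (A s)) {u : ℕ → H} {C : ℝ}
    (hu : ∀ j, ‖u j‖ ≤ C) (hw : ∀ z, Tendsto (fun j => ⟪u j, z⟫) atTop (𝓝 0)) {p : ℝ}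
    (hp : 0 < p) :
    Tendsto (fun j => ∫ s, ‖(A s†) (u j)‖ ^ p ∂μ) atTop (𝓝 0) := by
  have hbound j : ∀ᵐ s ∂μ, ‖‖(A s†) (u j)‖ ^ p‖ ≤ (M * C) ^ p := by
    filter_upwards [hM] with s hs
    rw [Real.norm_of_nonneg (by positivity)]
    refine Real.rpow_le_rpow (norm_nonneg _) ?_ hp.le
    exact (A s).norm_adjoint_apply_le_of_norm_le hs _ |>.trans
      (mul_le_mul_of_nonneg_left (hu j) ((norm_nonneg _).trans hs))
  have hlim : ∀ᵐ s ∂μ, Tendsto (fun j => ‖(A s†) (u j)‖ ^ p) atTop (𝓝 0) := by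
    filter_upwards [hK] with s hs
    simpa [Real.zero_rpow hp.ne'] using
      (hs.tendsto_norm_adjoint_apply hu hw).rpow_const (Or.inr hp.le)
  simpa using tendsto_integral_of_dominated_convergence _
    (fun j => ((measurable_norm_adjoint_apply hA (u j)).pow_const p).aestronglyMeasurable)
    (integrable_const _) hbound hlim

theorem abs_inner_integral_le_norm_mul (hA : ∀ x, Continuous fun s => A s x) {M : ℝ}
    (hM : ∀ᵐ s ∂μ, ‖A s‖ ≤ M) (f : Lp H 2 μ) (u : H) :
    |⟪∫ s, A s (f s) ∂μ, u⟫| ≤ ‖f‖ * (∫ s, ‖(A s†) u‖ ^ (2 : ℝ) ∂μ) ^ (1 / 2 : ℝ) := by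
  have hf : MemLp (fun s => ‖f s‖) 2 μ := (Lp.memLp f).norm
  have hh : MemLp (fun s => ‖(A s†) u‖) 2 μ := by
    refine MemLp.of_bound (measurable_norm_adjoint_apply hA u).aestronglyMeasurable (M * ‖u‖) ?_
    filter_upwards [hM] with s hs
    rw [norm_norm]
    exact (A s).norm_adjoint_apply_le_of_norm_le hs u
  have hnorm : (∫ s, ‖f s‖ ^ (2 : ℝ) ∂μ) ^ (1 / 2 : ℝ) = ‖f‖ := by
    rw [Lp.norm_def, (Lp.memLp f).eLpNorm_eq_integral_rpow_norm two_ne_zero ENNReal.ofNat_ne_top,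
      ENNReal.toReal_ofReal (by positivity)]
    norm_num
  refine (abs_inner_integral_le_integral_norm_mul A f u (hf.integrable_mul hh)).trans ?_
  rw [← hnorm]
  exact integral_mul_le_Lp_mul_Lq_of_nonneg Real.HolderConjugate.two_two
    (ae_of_all _ fun _ => norm_nonneg _) (ae_of_all _ fun _ => norm_nonneg _)
    (by simpa using hf) (by simpa using hh)

theorem isCompactOperator_of_forall_eq_integral (hA : ∀ x, Continuous fun s => A s x) {M : ℝ}
    (hM : ∀ᵐ s ∂μ, ‖A s‖ ≤ M) (hK : ∀ᵐ s ∂μ, IsCompactOperator (A s))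
    (T : Lp H 2 μ →L[ℝ] H) (hT : ∀ f, T f = ∫ s, A s (f s) ∂μ) : IsCompactOperator T := by
  refine (isCompactOperator_iff_exists_mem_nhds_isCompact_closure_image T).2
    ⟨_, Metric.closedBall_mem_nhds 0 one_pos, ?_⟩
  refine (TotallyBounded.closure ?_).isCompact_of_isClosed isClosed_closure
  refine totallyBounded_of_forall_weakly_null (R := ‖T‖) ?_ fun u C hu hw => ?_
  · rintro _ ⟨f, hf, rfl⟩
    exact T.le_of_opNorm_le_of_le le_rfl (mem_closedBall_zero_iff.1 hf) |>.trans_eq (mul_one _)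
  · have hc := (tendsto_integral_norm_adjoint_rpow hA hM hK hu hw two_pos).rpow_const
      (p := 1 / 2) (Or.inr (by norm_num))
    rw [Real.zero_rpow (by norm_num)] at hc
    refine ⟨_, hc, ?_⟩
    rintro j _ ⟨f, hf, rfl⟩
    rw [hT]
    exact (abs_inner_integral_le_norm_mul hA hM f (u j)).trans
      (mul_le_of_le_one_left (by positivity) (mem_closedBall_zero_iff.1 hf))

theorem totallyBounded_setOf_integral_of_norm_le [MeasurableSpace H] [BorelSpace H]
    (hA : ∀ x, Continuous fun s => A s x) {M : ℝ} (hM : ∀ᵐ s ∂μ, ‖A s‖ ≤ M)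
    (hK : ∀ᵐ s ∂μ, IsCompactOperator (A s)) (R : ℝ) :
    TotallyBounded
      {y : H | ∃ g : α → H, Measurable g ∧ (∀ s, ‖g s‖ ≤ R) ∧ y = ∫ s, A s (g s) ∂μ} := by
  refine totallyBounded_of_forall_weakly_null (R := M * R * μ.real Set.univ) ?_
    fun u C hu hw => ?_
  · rintro _ ⟨g, -, hg, rfl⟩
    refine norm_integral_le_of_norm_le_const ?_
    filter_upwards [hM] with s hs
    exact (A s).le_of_opNorm_le_of_le hs (hg s)
  · refine ⟨fun j => R * ∫ s, ‖(A s†) (u j)‖ ^ (1 : ℝ) ∂μ, (by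
      simpa using (tendsto_integral_norm_adjoint_rpow hA hM hK hu hw one_pos).const_mul R), ?_⟩
    rintro j _ ⟨g, hgm, hg, rfl⟩
    have hh : Integrable (fun s => ‖(A s†) (u j)‖) μ := by
      refine Integrable.of_bound (measurable_norm_adjoint_apply hA (u j)).aestronglyMeasurable
        (M * C) ?_
      filter_upwards [hM] with s hs
      rw [norm_norm]
      exact (A s).norm_adjoint_apply_le_of_norm_le hs _ |>.trans
        (mul_le_mul_of_nonneg_left (hu j) ((norm_nonneg _).trans hs))
    have hprod : Integrable (fun s => ‖g s‖ * ‖(A s†) (u j)‖) μ :=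
      hh.bdd_mul (c := R) hgm.norm.aestronglyMeasurable (ae_of_all _ fun s => by simpa using hg s)
    refine (abs_inner_integral_le_integral_norm_mul A g (u j) hprod).trans ?_
    simp_rw [Real.rpow_one, ← integral_const_mul]
    exact integral_mono_ae hprod (hh.const_mul R)
      (ae_of_all _ fun s => mul_le_mul_of_nonneg_right (hg s) (norm_nonneg _))

end Kernel

/-- If each `S_t` (`t > 0`) is compact then
`G f = ∫₀¹ S_{1-s} f(s) ds` is a compact operator `L²([0,1];H) → H`, and the set of
such integrals over measurable `g` bounded by `C_F` is relatively compact. -/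
theorem stmt_9 (H : Type*) [NormedAddCommGroup H] [InnerProductSpace ℝ H]
    [CompleteSpace H] [MeasurableSpace H] [BorelSpace H]
    (S : ℝ → (H →L[ℝ] H)) (hSsg : Continuous fun p : ℝ × H => S p.1 p.2)
    (hScomp : ∀ t > (0:ℝ), IsCompactOperator (S t))
    (G : Lp H 2 (volume.restrict (Set.Icc (0:ℝ) 1)) →L[ℝ] H)
    (hG : ∀ f : Lp H 2 (volume.restrict (Set.Icc (0:ℝ) 1)),
      G f = ∫ s in Set.Icc (0:ℝ) 1, S (1 - s) (f s)) (CF : ℝ) :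
    IsCompactOperator G ∧
    IsCompact (closure {y : H | ∃ g : ℝ → H, Measurable g ∧
      (∀ s, ‖g s‖ ≤ CF) ∧ y = ∫ s in Set.Icc (0:ℝ) 1, S (1 - s) (g s)}) := by
  have hS x : Continuous fun t => S t x := hSsg.comp (continuous_id.prodMk continuous_const)
  have hA x : Continuous fun s => S (1 - s) x := (hS x).comp (continuous_const.sub continuous_id)
  obtain ⟨M, hM⟩ := exists_forall_norm_le_of_isCompact hS isCompact_Icc (K := Set.Icc 0 1)
  have hMμ : ∀ᵐ s ∂volume.restrict (Set.Icc (0:ℝ) 1), ‖S (1 - s)‖ ≤ M := by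
    filter_upwards [ae_restrict_mem measurableSet_Icc] with s hs
    exact hM _ ⟨by linarith [hs.2], by linarith [hs.1]⟩
  have hKμ : ∀ᵐ s ∂volume.restrict (Set.Icc (0:ℝ) 1), IsCompactOperator (S (1 - s)) := by
    filter_upwards [ae_restrict_mem measurableSet_Icc,
      ae_restrict_of_ae (compl_mem_ae_iff.2 (measure_singleton (1 : ℝ)))] with s hs hs1
    exact hScomp _ (sub_pos.2 (hs.2.lt_of_ne hs1))
  exact ⟨isCompactOperator_of_forall_eq_integral hA hMμ hKμ G hG,
    (totallyBounded_setOf_integral_of_norm_le hA hMμ hKμ CF).closure.isCompact_of_isClosed isClosed_closure⟩
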